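/- Let β ∈ [0,1), λ = 1−β, and let n satisfy Assumption 1 with δ* = 0 (subexponential wild-type growth). Then for every integer k ≥ 1, lim_{t→∞} (1/n_t)·∫_0^t n_τ·P(Z_{t−τ} = k) dτ = 1/k; equivalently P(Y_t = k) ∼ n_t/(a_t·k) as t → ∞. -/

import Mathlib

open Filter Real intervalIntegral

/-- Assumption 1 on the wild-type growth function `n`. -/
def Assumption1 (n : ℝ → ℝ) : Prop :=
  (∀ τ : ℝ, τ < 0 → n τ = 0) ∧
  ContinuousOn n (Set.Ioi 0) ∧
  Filter.Tendsto n (nhdsWithin 0 (Set.Ioi 0)) (nhds (n 0)) ∧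
  (∀ τ : ℝ, 0 < τ → 0 < n τ) ∧
  MonotoneOn n (Set.Ioi 0) ∧
  (∀ x : ℝ, 0 ≤ x → ∃ L : ℝ, 0 < L ∧
    Filter.Tendsto (fun t : ℝ => n (t - x) / n t) Filter.atTop (nhds L))

/-- `S u = (1 - β e^{-λu})/(1 - e^{-λu})` with `λ = 1 - β`. -/
noncomputable def birthDeathS (β u : ℝ) : ℝ :=
  (1 - β * Real.exp (-(1 - β) * u)) / (1 - Real.exp (-(1 - β) * u))

/-- `P(Z_u = k) = (1 - β/S_u)(S_u - 1) S_u^{-k}` for `k ≥ 1`. -/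
noncomputable def birthDeathPMF (β u : ℝ) (k : ℕ) : ℝ :=
  (1 - β / birthDeathS β u) * (birthDeathS β u - 1) * ((birthDeathS β u)⁻¹) ^ k

/-!
Write `q u = 1 / S_u`. It solves the Kolmogorov equation `q' = (1 - q)(1 - β q)`, hence
`P(Z_u = k) = (q^k / k)'`, and as `q` increases from `0` to `1` we get
`∫_{u > 0} P(Z_u = k) du = 1 / k`. The substitution `u = t - τ` turns the quantity in question into
`∫_{u > 0} (n_{t-u} / n_t) P(Z_u = k) du`. Monotonicity of `n` bounds the ratio by `1`, and
subexponential growth forces every limit `n_{t-x} / n_t → L` to be `1`: otherwise `log n` would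
grow by `-log L ≠ 0` over each step of length `x`, and `log n_t / t` would tend to `-log L / x`.
Dominated convergence concludes.
-/

open MeasureTheory Set Topology

lemma tendsto_div_natCast_of_tendsto_sub {v : ℕ → ℝ} {a : ℝ}
    (h : Tendsto (fun M => v (M + 1) - v M) atTop (𝓝 a)) :
    Tendsto (fun M : ℕ => v M / M) atTop (𝓝 a) := by
  have hmean : Tendsto (fun M : ℕ => (M : ℝ)⁻¹ * (v M - v 0)) atTop (𝓝 a) := by
    simpa only [Finset.sum_range_sub] using h.cesaro
  have hinit : Tendsto (fun M : ℕ => (M : ℝ)⁻¹ * v 0) atTop (𝓝 0) := by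
    simpa using (tendsto_inv_atTop_zero.comp tendsto_natCast_atTop_atTop).mul_const (v 0)
  simpa [div_eq_inv_mul, mul_sub] using hmean.add hinit

lemma eq_zero_of_tendsto_sub_of_tendsto_div {f : ℝ → ℝ} {x a : ℝ} (hx : 0 < x)
    (hdiff : Tendsto (fun t => f t - f (t - x)) atTop (𝓝 a))
    (hf : Tendsto (fun t => f t / t) atTop (𝓝 0)) : a = 0 := by
  have hgrid : Tendsto (fun M : ℕ => x * M) atTop atTop :=
    tendsto_natCast_atTop_atTop.const_mul_atTop hx
  have hsucc : Tendsto (fun M : ℕ => f (x * ↑(M + 1)) - f (x * M)) atTop (𝓝 a) := by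
    refine (hdiff.comp (tendsto_natCast_atTop_atTop.comp (tendsto_add_atTop_nat 1)
      |>.const_mul_atTop hx)).congr fun M => ?_
    simp only [Function.comp_apply, Nat.cast_add, Nat.cast_one]
    ring_nf
  have hzero : Tendsto (fun M : ℕ => f (x * M) / M) atTop (𝓝 0) := by
    have h := (hf.comp hgrid).const_mul x
    rw [mul_zero] at h
    refine h.congr' ?_
    filter_upwards [eventually_ne_atTop 0] with M hM
    have hM' : (M : ℝ) ≠ 0 := Nat.cast_ne_zero.mpr hM
    simp only [Function.comp_apply]
    field_simp
  exact tendsto_nhds_unique (tendsto_div_natCast_of_tendsto_sub hsucc) hzero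

section BirthDeath

variable {β u : ℝ}

lemma one_sub_mul_exp_pos (hβ : β < 1) (hu : 0 ≤ u) : 0 < 1 - β * exp (-(1 - β) * u) := by
  have hX : exp (-(1 - β) * u) ≤ 1 := exp_le_one_iff.mpr (by nlinarith)
  nlinarith [exp_pos (-(1 - β) * u)]

lemma one_lt_birthDeathS (hβ : β < 1) (hu : 0 < u) : 1 < birthDeathS β u := by
  have hX : exp (-(1 - β) * u) < 1 := exp_lt_one_iff.mpr (by nlinarith)
  refine (one_lt_div (by linarith)).mpr ?_
  nlinarith [exp_pos (-(1 - β) * u)]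

lemma birthDeathPMF_nonneg (hβ : β < 1) (hu : 0 < u) (k : ℕ) : 0 ≤ birthDeathPMF β u k := by
  have hS := one_lt_birthDeathS hβ hu
  have hβS : β / birthDeathS β u ≤ 1 := (div_le_one (by linarith)).mpr (by linarith)
  unfold birthDeathPMF
  have hinv := inv_nonneg.mpr (zero_le_one.trans hS.le)
  apply mul_nonneg (mul_nonneg _ _) (pow_nonneg hinv k) <;> linarith

lemma birthDeathPMF_succ (hS : birthDeathS β u ≠ 0) (k : ℕ) :
    birthDeathPMF β u (k + 1) =
      (1 - β * (birthDeathS β u)⁻¹) * (1 - (birthDeathS β u)⁻¹) * (birthDeathS β u)⁻¹ ^ k := by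
  have hinv : birthDeathS β u * (birthDeathS β u)⁻¹ = 1 := mul_inv_cancel₀ hS
  unfold birthDeathPMF
  rw [div_eq_mul_inv]
  linear_combination
    (1 - β * (birthDeathS β u)⁻¹) * (birthDeathS β u)⁻¹ ^ k * hinv

/-- Since `(a / b)⁻¹ = b / a` holds unconditionally, `(birthDeathS β ·)⁻¹` is the smooth function
`(1 - e^{-λv}) / (1 - β e^{-λv})`, also at `v = 0`, where `birthDeathS` itself divides by zero. -/
lemma hasDerivAt_birthDeathS_inv (hβ : β < 1) (hu : 0 ≤ u) :
    HasDerivAt (fun v => (birthDeathS β v)⁻¹)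
      ((1 - β * (birthDeathS β u)⁻¹) * (1 - (birthDeathS β u)⁻¹)) u := by
  have hden := one_sub_mul_exp_pos hβ hu
  have hexp : HasDerivAt (fun v => exp (-(1 - β) * v)) (exp (-(1 - β) * u) * (-(1 - β))) u := by
    simpa using ((hasDerivAt_id u).const_mul (-(1 - β))).exp
  have hq : HasDerivAt (fun v => (1 - exp (-(1 - β) * v)) / (1 - β * exp (-(1 - β) * v))) _ u :=
    ((hasDerivAt_const u 1).sub hexp).div ((hasDerivAt_const u 1).sub (hexp.const_mul β)) hden.ne'
  simp only [birthDeathS, inv_div]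
  refine hq.congr_deriv ?_
  simp only [Pi.sub_apply]
  generalize exp (-(1 - β) * u) = X at hden ⊢
  have hX : 1 - X * β ≠ 0 := by rw [mul_comm]; exact hden.ne'
  field_simp
  ring

lemma tendsto_birthDeathS_inv_atTop (hβ : β < 1) :
    Tendsto (fun u => (birthDeathS β u)⁻¹) atTop (𝓝 1) := by
  have hX : Tendsto (fun u => exp (-(1 - β) * u)) atTop (𝓝 0) :=
    tendsto_exp_atBot.comp (tendsto_id.const_mul_atTop_of_neg (by linarith))
  have hq : Tendsto (fun u => (1 - exp (-(1 - β) * u)) / (1 - β * exp (-(1 - β) * u))) atTop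
      (𝓝 ((1 - 0) / (1 - β * 0))) :=
    (tendsto_const_nhds.sub hX).div (tendsto_const_nhds.sub (hX.const_mul β)) (by simp)
  simpa only [birthDeathS, inv_div, sub_zero, mul_zero, div_one] using hq

lemma hasDerivAt_birthDeathS_inv_pow_div (hβ : β < 1) {k : ℕ} (hk : k ≠ 0) (hu : 0 < u) :
    HasDerivAt (fun v => (birthDeathS β v)⁻¹ ^ k / k) (birthDeathPMF β u k) u := by
  obtain ⟨k, rfl⟩ := Nat.exists_eq_add_one_of_ne_zero hk
  have hS : birthDeathS β u ≠ 0 := by linarith [one_lt_birthDeathS hβ hu]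
  refine (((hasDerivAt_birthDeathS_inv hβ hu.le).pow (k + 1)).div_const _).congr_deriv ?_
  rw [birthDeathPMF_succ hS]
  field_simp
  push_cast
  ring

lemma continuousWithinAt_birthDeathS_inv_pow_div (hβ : β < 1) (k : ℕ) :
    ContinuousWithinAt (fun v => (birthDeathS β v)⁻¹ ^ k / k) (Ici 0) 0 :=
  (((hasDerivAt_birthDeathS_inv hβ le_rfl).continuousAt.pow k).div_const _).continuousWithinAt

lemma tendsto_birthDeathS_inv_pow_div (hβ : β < 1) (k : ℕ) :
    Tendsto (fun v => (birthDeathS β v)⁻¹ ^ k / k) atTop (𝓝 (1 / k)) := by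
  simpa using ((tendsto_birthDeathS_inv_atTop hβ).pow k).div_const (k : ℝ)

lemma integrableOn_Ioi_birthDeathPMF (hβ : β < 1) {k : ℕ} (hk : k ≠ 0) :
    IntegrableOn (fun u => birthDeathPMF β u k) (Ioi 0) :=
  integrableOn_Ioi_deriv_of_nonneg (continuousWithinAt_birthDeathS_inv_pow_div hβ k)
    (fun _ hu => hasDerivAt_birthDeathS_inv_pow_div hβ hk hu)
    (fun _ hu => birthDeathPMF_nonneg hβ hu k) (tendsto_birthDeathS_inv_pow_div hβ k)

lemma integral_Ioi_birthDeathPMF (hβ : β < 1) {k : ℕ} (hk : k ≠ 0) :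
    ∫ u in Ioi 0, birthDeathPMF β u k = 1 / k := by
  rw [integral_Ioi_of_hasDerivAt_of_nonneg (continuousWithinAt_birthDeathS_inv_pow_div hβ k)
    (fun _ hu => hasDerivAt_birthDeathS_inv_pow_div hβ hk hu)
    (fun _ hu => birthDeathPMF_nonneg hβ hu k) (tendsto_birthDeathS_inv_pow_div hβ k)]
  simp [birthDeathS, hk]

end BirthDeath

namespace Assumption1

variable {n : ℝ → ℝ}

lemma nonneg (hn : Assumption1 n) (τ : ℝ) : 0 ≤ n τ := by
  obtain ⟨hneg, -, hright, hpos, -⟩ := hn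
  rcases lt_trichotomy τ 0 with hτ | rfl | hτ
  · exact (hneg τ hτ).ge
  · exact ge_of_tendsto hright (eventually_nhdsWithin_of_forall fun x hx => (hpos x hx).le)
  · exact (hpos τ hτ).le

lemma monotone (hn : Assumption1 n) : Monotone n := by
  intro s t hst
  have hnt := hn.nonneg t
  obtain ⟨hneg, -, hright, -, hmono, -⟩ := hn
  rcases lt_trichotomy s 0 with hs | rfl | hs
  · exact (hneg s hs).trans_le hnt
  · rcases hst.eq_or_lt with rfl | ht
    · exact le_rfl
    · refine le_of_tendsto hright ?_
      filter_upwards [Ioo_mem_nhdsGT ht] with x hx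
      exact hmono hx.1 ht hx.2.le
  · exact hmono hs (hs.trans_le hst) hst

lemma tendsto_ratio (hn : Assumption1 n)
    (hδ : Tendsto (fun t => log (n t) / t) atTop (𝓝 0)) {x : ℝ} (hx : 0 ≤ x) :
    Tendsto (fun t => n (t - x) / n t) atTop (𝓝 1) := by
  obtain ⟨-, -, -, hn_pos, -, hlim⟩ := hn
  have hpos : ∀ᶠ t in atTop, 0 < n (t - x) ∧ 0 < n t := by
    filter_upwards [eventually_gt_atTop x] with t ht
    exact ⟨hn_pos _ (by linarith), hn_pos _ (by linarith)⟩
  obtain ⟨L, hL, hratio⟩ := hlim x hx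
  suffices L = 1 from this ▸ hratio
  rcases hx.eq_or_lt with rfl | hx
  · refine tendsto_nhds_unique hratio (tendsto_const_nhds.congr' ?_)
    filter_upwards [hpos] with t ht
    rw [sub_zero, div_self ht.2.ne']
  · have hlog : Tendsto (fun t => log (n t) - log (n (t - x))) atTop (𝓝 (-log L)) := by
      refine ((continuousAt_log hL.ne').tendsto.comp hratio).neg.congr' ?_
      filter_upwards [hpos] with t ht
      simp only [Function.comp_apply, log_div ht.1.ne' ht.2.ne']
      ring
    exact eq_one_of_pos_of_log_eq_zero hL
      (neg_eq_zero.mp (eq_zero_of_tendsto_sub_of_tendsto_div hx hlog hδ))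

end Assumption1

lemma intervalIntegral_mul_comp_sub_eq_setIntegral_Ioi {n g : ℝ → ℝ}
    (hn : ∀ τ < 0, n τ = 0) {t : ℝ} (ht : 0 ≤ t) :
    ∫ τ in (0 : ℝ)..t, n τ * g (t - τ) = ∫ u in Ioi 0, n (t - u) * g u := by
  have hsub :=
    intervalIntegral.integral_comp_sub_left (fun u => n (t - u) * g u) t (a := 0) (b := t)
  simp only [sub_sub_cancel, sub_self, sub_zero] at hsub
  rw [hsub, intervalIntegral.integral_of_le ht, setIntegral_eq_of_subset_of_forall_sdiff_eq_zero
    measurableSet_Ioi Ioc_subset_Ioi_self]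
  rintro u ⟨hu, hut⟩
  simp [hn (t - u) (by simp_all)]

lemma tendsto_setIntegral_Ioi_ratio_mul {n g : ℝ → ℝ} (hmono : Monotone n)
    (hnonneg : ∀ τ, 0 ≤ n τ) (hratio : ∀ x > 0, Tendsto (fun t => n (t - x) / n t) atTop (𝓝 1))
    (hg : IntegrableOn g (Ioi 0)) :
    Tendsto (fun t => ∫ u in Ioi 0, n (t - u) / n t * g u) atTop (𝓝 (∫ u in Ioi 0, g u)) := by
  refine tendsto_integral_filter_of_dominated_convergence (fun u => ‖g u‖) ?_ ?_ hg.norm ?_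
  · refine Eventually.of_forall fun t => ?_
    have hshift : Measurable fun u => n (t - u) :=
      hmono.measurable.comp (measurable_const.sub measurable_id)
    exact (hshift.div_const _).aestronglyMeasurable.mul hg.aestronglyMeasurable
  · refine Eventually.of_forall fun t => ae_restrict_of_forall_mem measurableSet_Ioi fun u hu => ?_
    rw [norm_mul]
    refine mul_le_of_le_one_left (norm_nonneg _) ?_
    rw [Real.norm_of_nonneg (div_nonneg (hnonneg _) (hnonneg _))]
    exact div_le_one_of_le₀ (hmono (sub_le_self t (le_of_lt hu))) (hnonneg t)
  · refine ae_restrict_of_forall_mem measurableSet_Ioi fun u hu => ?_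
    simpa using (hratio u hu).mul_const (g u)

/-- For subexponential wild-type growth (`δ* = 0`), the rescaled clone size probabilities
satisfy `lim_{t→∞} (1/n_t)∫_0^t n_τ P(Z_{t−τ}=k) dτ = 1/k` for every `k ≥ 1`. -/
theorem subexponential_clone_size_limit
    (β : ℝ) (hβ : β ∈ Set.Ico (0 : ℝ) 1)
    (n : ℝ → ℝ) (hn : Assumption1 n)
    (hδlim : Filter.Tendsto (fun t : ℝ => Real.log (n t) / t) Filter.atTop (nhds 0)) :
    ∀ k : ℕ, 1 ≤ k →
      Filter.Tendsto
        (fun t : ℝ => (1 / n t) * ∫ τ in (0:ℝ)..t, n τ * birthDeathPMF β (t - τ) k)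
        Filter.atTop (nhds (1 / (k : ℝ))) := by
  intro k hk
  have hk0 : k ≠ 0 := Nat.one_le_iff_ne_zero.mp hk
  have hlim := tendsto_setIntegral_Ioi_ratio_mul hn.monotone hn.nonneg
    (fun x hx => hn.tendsto_ratio hδlim hx.le) (integrableOn_Ioi_birthDeathPMF hβ.2 hk0)
  rw [integral_Ioi_birthDeathPMF hβ.2 hk0] at hlim
  refine hlim.congr' ?_
  filter_upwards [eventually_ge_atTop 0] with t ht
  rw [intervalIntegral_mul_comp_sub_eq_setIntegral_Ioi (g := (birthDeathPMF β · k)) hn.1 ht,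
    ← MeasureTheory.integral_const_mul]
  congr with u
  ring
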